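/- The k-algebra e_m H_m e_m (with unit e_m) is isomorphic to the ring of symmetric polynomials k[x_1, …, x_m]^{S_m}, where e_m = ∂_{w_0} ∘ (multiplication by x_1^{m−1} x_2^{m−2} ⋯ x_{m−1}) is the idempotent of H_m associated to a fixed reduced word (i_1, …, i_N) of the longest element w_0 ∈ S_m, ∂_{w_0} = ∂_{i_1} ∘ ⋯ ∘ ∂_{i_N}, N = m(m−1)/2. -/

import Mathlib

set_option synthInstance.maxHeartbeats 1000000

open MvPolynomial

/-- The operator of multiplication by a polynomial `p` on `k[x_1, …, x_{m+1}]`. -/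
noncomputable def mulOp (k : Type) [Field k] (m : ℕ) (p : MvPolynomial (Fin (m + 1)) k) :
    Module.End k (MvPolynomial (Fin (m + 1)) k) :=
  LinearMap.mulLeft k p

/-- `D` is the family of divided difference operators `∂_i` on `k[x_1, …, x_{m+1}]`:
`∂_i f = (f - s_i f)/(x_i - x_{i+1})`, characterized by
`(x_i - x_{i+1}) * ∂_i f = f - s_i f`, where `s_i` transposes the variables
`x_i` and `x_{i+1}`.  (This characterizes `∂_i f` uniquely, since `k[x]` is a domain.) -/
def IsDividedDifferenceFamily (k : Type) [Field k] (m : ℕ)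
    (D : Fin m → Module.End k (MvPolynomial (Fin (m + 1)) k)) : Prop :=
  ∀ (i : Fin m) (f : MvPolynomial (Fin (m + 1)) k),
    (X i.castSucc - X i.succ) * D i f =
      f - rename (Equiv.swap i.castSucc i.succ) f

/-- The nilHecke algebra `H_{m+1}`: the subalgebra of `End_k(k[x_1, …, x_{m+1}])`
generated by the multiplication operators `x_1, …, x_{m+1}` and the divided difference
operators `∂_1, …, ∂_m`. -/
noncomputable def nilHecke (k : Type) [Field k] (m : ℕ)
    (D : Fin m → Module.End k (MvPolynomial (Fin (m + 1)) k)) :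
    Subalgebra k (Module.End k (MvPolynomial (Fin (m + 1)) k)) :=
  Algebra.adjoin k
    ((Set.range fun j : Fin (m + 1) => mulOp k m (X j)) ∪ Set.range D)


/-!
Every element of the nilHecke algebra commutes with multiplication by symmetric polynomials,
because each `∂_i` does. The operators `∂_i` satisfy the braid relations and `∂_i² = 0`, so by
Matsumoto's theorem `∂_{w₀}` does not depend on the reduced word, and `∂_i ∂_{w₀} = 0` since
`s_i w₀` is shorter than `w₀`: hence `e` takes symmetric values. Computing along the staircase
word `(s₁)(s₂s₁)⋯(s_m⋯s₁)` gives `∂_{w₀}(x^δ) = 1`, so `e 1 = 1` and `e` is a projection onto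
the symmetric polynomials that is linear over them. Then `p ↦ p e` is multiplicative, injective
(evaluate at `1`), and every `e S e` equals `(e (S 1)) e`.
-/

open Equiv Finset

lemma Equiv.swap_mul_swap_mul_swap_eq {α : Type*} [DecidableEq α] {a b c : α} (hab : a ≠ b)
    (hac : a ≠ c) (hbc : b ≠ c) :
    swap a b * swap b c * swap a b = swap b c * swap a b * swap b c := by
  rw [swap_mul_swap_mul_swap hab hac, swap_comm a b, swap_comm b c,
    swap_mul_swap_mul_swap hbc.symm hac.symm, swap_comm]

namespace Equiv.Perm

section Inversions

variable {n : ℕ}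

def inversions (w : Perm (Fin n)) : Finset (Fin n × Fin n) :=
  {p | p.1 < p.2 ∧ w p.2 < w p.1}

def numInversions (w : Perm (Fin n)) : ℕ := w.inversions.card

@[simp]
lemma mem_inversions {w : Perm (Fin n)} {p : Fin n × Fin n} :
    p ∈ w.inversions ↔ p.1 < p.2 ∧ w p.2 < w p.1 := by
  simp [inversions]

lemma numInversions_one : numInversions (1 : Perm (Fin n)) = 0 := by
  simpa [numInversions, Finset.eq_empty_iff_forall_notMem] using fun _ _ => le_of_lt

lemma inversions_subset_revPerm (w : Perm (Fin n)) : w.inversions ⊆ inversions Fin.revPerm :=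
  fun _ hp => by simpa using (mem_inversions.mp hp).1

lemma numInversions_revPerm : numInversions (Fin.revPerm : Perm (Fin n)) = n * (n - 1) / 2 := by
  have hcard (a : Fin n) : #{b | a < b} = n - 1 - a := by
    rw [Finset.filter_lt_eq_Ioi, Fin.card_Ioi]
  rw [numInversions, inversions, Finset.card_filter, Fintype.sum_prod_type]
  simp only [Fin.revPerm_apply, Fin.rev_lt_rev, and_self, ← Finset.card_filter, hcard]
  rw [Fin.sum_univ_eq_sum_range (fun i => n - 1 - i), Finset.sum_range_reflect (fun i => i),
    Finset.sum_range_id]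

lemma numInversions_le (w : Perm (Fin n)) : w.numInversions ≤ n * (n - 1) / 2 :=
  numInversions_revPerm (n := n) ▸ Finset.card_le_card (inversions_subset_revPerm w)

lemma eq_revPerm_of_numInversions_eq {w : Perm (Fin n)}
    (h : w.numInversions = n * (n - 1) / 2) : w = Fin.revPerm := by
  have hset : w.inversions = inversions Fin.revPerm :=
    Finset.eq_of_subset_of_card_le (inversions_subset_revPerm w)
      (by rw [← numInversions, ← numInversions, h, numInversions_revPerm])
  have hanti : StrictMono (w ∘ Fin.rev) := fun x y hxy => by
    have : (y.rev, x.rev) ∈ inversions Fin.revPerm := by simpa using hxy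
    simpa using (mem_inversions.mp (hset ▸ this)).2
  refine Equiv.ext fun x => ?_
  simpa using congrFun hanti.eq_id x.rev

lemma swap_lt_swap_iff_of_succ_eq {a b : Fin n} (hab : (a : ℕ) + 1 = b) (x y : Fin n) :
    swap a b y < swap a b x ↔ x = a ∧ y = b ∨ y < x ∧ ¬(x = b ∧ y = a) := by
  simp only [swap_apply_def, Fin.ext_iff, Fin.lt_def]
  split_ifs <;> omega

lemma inversions_swap_mul_of_lt {a b : Fin n} (hab : (a : ℕ) + 1 = b) {w : Perm (Fin n)}
    (h : w.symm a < w.symm b) :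
    (swap a b * w).inversions = insert (w.symm a, w.symm b) w.inversions := by
  ext ⟨p, q⟩
  simp only [mem_inversions, mul_apply, swap_lt_swap_iff_of_succ_eq hab, Finset.mem_insert,
    Prod.mk.injEq, ← w.eq_symm_apply]
  constructor
  · rintro ⟨hpq, ⟨hp, hq⟩ | ⟨hqp, -⟩⟩
    · exact Or.inl ⟨hp, hq⟩
    · exact Or.inr ⟨hpq, hqp⟩
  · rintro (⟨hp, hq⟩ | ⟨hpq, hqp⟩)
    · exact ⟨hp ▸ hq ▸ h, Or.inl ⟨hp, hq⟩⟩
    · refine ⟨hpq, Or.inr ⟨hqp, fun ⟨hp, hq⟩ => ?_⟩⟩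
      exact (hp ▸ hq ▸ hpq).asymm h

lemma numInversions_swap_mul_of_lt {a b : Fin n} (hab : (a : ℕ) + 1 = b) {w : Perm (Fin n)}
    (h : w.symm a < w.symm b) :
    (swap a b * w).numInversions = w.numInversions + 1 := by
  rw [numInversions, inversions_swap_mul_of_lt hab h, Finset.card_insert_of_notMem]
  · rfl
  · intro hmem
    have := (mem_inversions.mp hmem).2
    simp only [apply_symm_apply, Fin.lt_def] at this
    omega

end Inversions

section Words

variable {m : ℕ}

def adjSwap (i : Fin m) : Perm (Fin (m + 1)) := swap i.castSucc i.succ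

def wordProd (l : List (Fin m)) : Perm (Fin (m + 1)) := (l.map adjSwap).prod

@[simp]
lemma wordProd_cons (i : Fin m) (l : List (Fin m)) :
    wordProd (i :: l) = adjSwap i * wordProd l := rfl

lemma wordProd_append (l l' : List (Fin m)) :
    wordProd (l ++ l') = wordProd l * wordProd l' := by
  simp [wordProd]

lemma adjSwap_mul_adjSwap_mul (i : Fin m) (w : Perm (Fin (m + 1))) :
    adjSwap i * (adjSwap i * w) = w := by
  rw [← mul_assoc, adjSwap, swap_mul_self, one_mul]

lemma adjSwap_apply_of_ne {i : Fin m} {x : Fin (m + 1)} (h₁ : (x : ℕ) ≠ i)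
    (h₂ : (x : ℕ) ≠ i + 1) : adjSwap i x = x :=
  swap_apply_of_ne_of_ne (by simpa [Fin.ext_iff] using h₁) (by simpa [Fin.ext_iff] using h₂)

lemma adjSwap_braid {i j : Fin m} (hij : (i : ℕ) + 1 = j) :
    adjSwap i * adjSwap j * adjSwap i = adjSwap j * adjSwap i * adjSwap j := by
  have hq : j.castSucc = i.succ := Fin.ext (by simp [hij])
  unfold adjSwap
  rw [hq]
  exact swap_mul_swap_mul_swap_eq Fin.castSucc_lt_succ.ne (by simp [Fin.ext_iff]; omega)
    (by simp [Fin.ext_iff]; omega)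

lemma adjSwap_comm {i j : Fin m} (hij : (i : ℕ) + 2 ≤ j) :
    adjSwap i * adjSwap j = adjSwap j * adjSwap i :=
  (disjoint_swap_swap (by simp [Fin.ext_iff]; omega)).commute.eq

/-- `i` is a left descent of `w` when `s_i w` is shorter than `w`. -/
def IsLeftDescent (i : Fin m) (w : Perm (Fin (m + 1))) : Prop :=
  w.symm i.succ < w.symm i.castSucc

lemma symm_succ_ne_symm_castSucc (i : Fin m) (w : Perm (Fin (m + 1))) :
    w.symm i.succ ≠ w.symm i.castSucc :=
  w.symm.injective.ne Fin.castSucc_lt_succ.ne'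

lemma isLeftDescent_adjSwap_mul_iff {i : Fin m} {w : Perm (Fin (m + 1))} :
    IsLeftDescent i (adjSwap i * w) ↔ ¬IsLeftDescent i w := by
  change w.symm (adjSwap i i.succ) < w.symm (adjSwap i i.castSucc) ↔ _
  rw [adjSwap, swap_apply_right, swap_apply_left, IsLeftDescent, not_lt]
  exact (symm_succ_ne_symm_castSucc i w).symm.le_iff_lt.symm

lemma numInversions_adjSwap_mul {i : Fin m} {w : Perm (Fin (m + 1))}
    (h : ¬IsLeftDescent i w) : (adjSwap i * w).numInversions = w.numInversions + 1 :=
  numInversions_swap_mul_of_lt (by simp)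
    ((not_lt.mp h).lt_of_ne (symm_succ_ne_symm_castSucc i w).symm)

lemma numInversions_adjSwap_mul_of_isLeftDescent {i : Fin m} {w : Perm (Fin (m + 1))}
    (h : IsLeftDescent i w) : (adjSwap i * w).numInversions + 1 = w.numInversions := by
  have h' : ¬IsLeftDescent i (adjSwap i * w) := fun h' => isLeftDescent_adjSwap_mul_iff.mp h' h
  rw [← numInversions_adjSwap_mul h', adjSwap_mul_adjSwap_mul]

lemma isLeftDescent_adjSwap_mul_of_add_two_le {a c : Fin m} {w : Perm (Fin (m + 1))}
    (hac : (a : ℕ) + 2 ≤ c) (hc : IsLeftDescent c w) : IsLeftDescent c (adjSwap a * w) := by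
  have h₁ : adjSwap a c.succ = c.succ := adjSwap_apply_of_ne (by simp; omega) (by simp; omega)
  have h₂ : adjSwap a c.castSucc = c.castSucc :=
    adjSwap_apply_of_ne (by simp; omega) (by simp; omega)
  change w.symm (adjSwap a c.succ) < w.symm (adjSwap a c.castSucc)
  rwa [h₁, h₂]

lemma isLeftDescent_adjSwap_mul_of_add_one_eq {a c : Fin m} {w : Perm (Fin (m + 1))}
    (hac : (a : ℕ) + 1 = c) (ha : IsLeftDescent a w) (hc : IsLeftDescent c w) :
    IsLeftDescent c (adjSwap a * w) ∧ IsLeftDescent a (adjSwap c * (adjSwap a * w)) := by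
  have hq : c.castSucc = a.succ := Fin.ext (by simp [hac])
  have h₁ : adjSwap a c.succ = c.succ := adjSwap_apply_of_ne (by simp; omega) (by simp; omega)
  have h₂ : adjSwap c a.castSucc = a.castSucc :=
    adjSwap_apply_of_ne (by simp; omega) (by simp; omega)
  have h₃ : adjSwap c a.succ = c.succ := by rw [← hq, adjSwap, swap_apply_left]
  have h₄ : adjSwap a a.castSucc = a.succ := swap_apply_left _ _
  have h₅ : adjSwap a c.castSucc = a.castSucc := by rw [hq, adjSwap, swap_apply_right]
  unfold IsLeftDescent at ha hc
  rw [hq] at hc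
  constructor
  · change w.symm (adjSwap a c.succ) < w.symm (adjSwap a c.castSucc)
    rw [h₁, h₅]
    exact hc.trans ha
  · change w.symm (adjSwap a (adjSwap c a.succ)) < w.symm (adjSwap a (adjSwap c a.castSucc))
    rwa [h₃, h₁, h₂, h₄]

lemma exists_isLeftDescent {w : Perm (Fin (m + 1))} (hw : w ≠ 1) : ∃ i, IsLeftDescent i w := by
  by_contra! h
  have hmono : StrictMono w.symm := Fin.strictMono_iff_lt_succ.mpr fun i =>
    (not_lt.mp (h i)).lt_of_ne (symm_succ_ne_symm_castSucc i w).symm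
  exact hw (inv_eq_one.mp (Equiv.ext fun x => congrFun hmono.eq_id x))

def IsReducedWord (l : List (Fin m)) : Prop := (wordProd l).numInversions = l.length

lemma isReducedWord_nil : IsReducedWord ([] : List (Fin m)) := numInversions_one

lemma numInversions_wordProd_le (l : List (Fin m)) :
    (wordProd l).numInversions ≤ l.length := by
  induction l with
  | nil => exact numInversions_one.le
  | cons i t ih =>
    by_cases h : IsLeftDescent i (wordProd t)
    · have := numInversions_adjSwap_mul_of_isLeftDescent h
      simp only [wordProd_cons, List.length_cons]
      omega
    · simp only [wordProd_cons, List.length_cons, numInversions_adjSwap_mul h]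
      omega

lemma isReducedWord_cons_iff {i : Fin m} {t : List (Fin m)} :
    IsReducedWord (i :: t) ↔ IsReducedWord t ∧ ¬IsLeftDescent i (wordProd t) := by
  have hle := numInversions_wordProd_le t
  unfold IsReducedWord
  by_cases h : IsLeftDescent i (wordProd t)
  · have := numInversions_adjSwap_mul_of_isLeftDescent h
    simp only [wordProd_cons, List.length_cons, h, not_true, and_false, iff_false]
    omega
  · simp only [wordProd_cons, List.length_cons, numInversions_adjSwap_mul h, h,
      not_false_eq_true, and_true, add_left_inj]

lemma IsReducedWord.isLeftDescent_head {i : Fin m} {t : List (Fin m)}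
    (h : IsReducedWord (i :: t)) : IsLeftDescent i (wordProd (i :: t)) :=
  isLeftDescent_adjSwap_mul_iff.mpr (isReducedWord_cons_iff.mp h).2

lemma IsReducedWord.length_eq {l l' : List (Fin m)} (hl : IsReducedWord l)
    (hl' : IsReducedWord l') (h : wordProd l = wordProd l') : l.length = l'.length := by
  rw [← hl, ← hl', h]

lemma IsReducedWord.cons {i : Fin m} {r : List (Fin m)} {w : Perm (Fin (m + 1))}
    (hr : IsReducedWord r) (hw : wordProd r = adjSwap i * w) (h : IsLeftDescent i w) :
    IsReducedWord (i :: r) ∧ wordProd (i :: r) = w := by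
  refine ⟨isReducedWord_cons_iff.mpr ⟨hr, ?_⟩, ?_⟩
  · rwa [hw, isLeftDescent_adjSwap_mul_iff, not_not]
  · rw [wordProd_cons, hw, adjSwap_mul_adjSwap_mul]

lemma exists_isReducedWord (w : Perm (Fin (m + 1))) :
    ∃ l, IsReducedWord l ∧ wordProd l = w := by
  induction hN : w.numInversions using Nat.strong_induction_on generalizing w with
  | _ N ih =>
  by_cases hw : w = 1
  · exact ⟨[], isReducedWord_nil, hw.symm⟩
  obtain ⟨i, hi⟩ := exists_isLeftDescent hw
  obtain ⟨r, hr, hrw⟩ := ih _ (by have := numInversions_adjSwap_mul_of_isLeftDescent hi; omega)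
    (adjSwap i * w) rfl
  exact ⟨i :: r, hr.cons hrw hi⟩

lemma exists_isReducedWord_cons {i : Fin m} {w : Perm (Fin (m + 1))} (h : IsLeftDescent i w) :
    ∃ r, IsReducedWord (i :: r) ∧ wordProd (i :: r) = w := by
  obtain ⟨r, hr, hrw⟩ := exists_isReducedWord (adjSwap i * w)
  exact ⟨r, hr.cons hrw h⟩

end Words

section Matsumoto

variable {m : ℕ}

def braidWord (a c : Fin m) : List (Fin m) :=
  a :: c :: if (a : ℕ) + 1 = c ∨ (c : ℕ) + 1 = a then [a] else []

lemma length_braidWord_comm (a c : Fin m) :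
    (braidWord a c).length = (braidWord c a).length := by
  simp only [braidWord, Or.comm (a := (a : ℕ) + 1 = c)]
  split_ifs <;> rfl

def SatisfiesBraidRelations {M : Type*} [Mul M] (f : Fin m → M) : Prop :=
  (∀ i j : Fin m, (i : ℕ) + 1 = j → f i * f j * f i = f j * f i * f j) ∧
    ∀ i j : Fin m, (i : ℕ) + 2 ≤ j → f i * f j = f j * f i

lemma satisfiesBraidRelations_adjSwap : SatisfiesBraidRelations (adjSwap (m := m)) :=
  ⟨fun _ _ => adjSwap_braid, fun _ _ => adjSwap_comm⟩

lemma SatisfiesBraidRelations.prod_map_braidWord_comm {M : Type*} [Monoid M] {f : Fin m → M}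
    (hf : SatisfiesBraidRelations f) (a c : Fin m) :
    ((braidWord a c).map f).prod = ((braidWord c a).map f).prod := by
  simp only [braidWord, Or.comm (a := (a : ℕ) + 1 = c)]
  split_ifs with h
  · simp only [List.map_cons, List.map_nil, List.prod_cons, List.prod_nil, mul_one, ← mul_assoc]
    rcases h with h | h
    · exact (hf.1 c a h).symm
    · exact hf.1 a c h
  · simp only [List.map_cons, List.map_nil, List.prod_cons, List.prod_nil, mul_one]
    rcases lt_trichotomy (a : ℕ) c with hlt | heq | hgt
    · exact hf.2 a c (by omega)
    · rw [Fin.ext heq]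
    · exact (hf.2 c a (by omega)).symm

lemma IsReducedWord.braidWord_comm_append {a c : Fin m} {r : List (Fin m)}
    (h : IsReducedWord (braidWord a c ++ r)) :
    IsReducedWord (braidWord c a ++ r) ∧
      wordProd (braidWord c a ++ r) = wordProd (braidWord a c ++ r) := by
  have hw : wordProd (braidWord c a ++ r) = wordProd (braidWord a c ++ r) := by
    rw [wordProd_append, wordProd_append]
    exact congrArg (· * wordProd r) (satisfiesBraidRelations_adjSwap.prod_map_braidWord_comm c a)
  refine ⟨?_, hw⟩
  rw [IsReducedWord, hw, h, List.length_append, List.length_append, length_braidWord_comm]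

lemma exists_isReducedWord_braidWord_append {a c : Fin m} {w : Perm (Fin (m + 1))}
    (hac : a ≠ c) (ha : IsLeftDescent a w) (hc : IsLeftDescent c w) :
    ∃ r, IsReducedWord (braidWord a c ++ r) ∧ wordProd (braidWord a c ++ r) = w := by
  wlog hlt : a < c generalizing a c
  · obtain ⟨r, hr, hrw⟩ := this hac.symm hc ha (hac.symm.lt_of_le (not_lt.mp hlt))
    exact ⟨r, hr.braidWord_comm_append.1, hr.braidWord_comm_append.2.trans hrw⟩
  rw [Fin.lt_def] at hlt
  rcases (by omega : (a : ℕ) + 1 = c ∨ (a : ℕ) + 2 ≤ c) with hadj | hfar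
  · obtain ⟨hc', ha'⟩ := isLeftDescent_adjSwap_mul_of_add_one_eq hadj ha hc
    obtain ⟨r, hr, hrw⟩ := exists_isReducedWord_cons ha'
    obtain ⟨hr, hrw⟩ := hr.cons hrw hc'
    refine ⟨r, ?_⟩
    simpa [braidWord, hadj] using hr.cons hrw ha
  · obtain ⟨r, hr, hrw⟩ :=
      exists_isReducedWord_cons (isLeftDescent_adjSwap_mul_of_add_two_le hfar hc)
    refine ⟨r, ?_⟩
    simpa [braidWord, show ¬((a : ℕ) + 1 = c ∨ (c : ℕ) + 1 = a) by omega] using hr.cons hrw ha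

variable {M : Type*} {f : Fin m → M}

/-- Matsumoto's theorem for the symmetric group. -/
theorem SatisfiesBraidRelations.prod_map_eq_of_isReducedWord [Monoid M]
    (hf : SatisfiesBraidRelations f) {l l' : List (Fin m)} (hl : IsReducedWord l)
    (hl' : IsReducedWord l') (h : wordProd l = wordProd l') :
    (l.map f).prod = (l'.map f).prod := by
  induction hN : l.length using Nat.strong_induction_on generalizing l l' with
  | _ N ih =>
  have same_head : ∀ {i : Fin m} {t t' : List (Fin m)}, t.length < N →
      IsReducedWord (i :: t) → IsReducedWord (i :: t') →
      wordProd (i :: t) = wordProd (i :: t') → ((i :: t).map f).prod = ((i :: t').map f).prod := by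
    intro i t t' hlt ht ht' htt'
    simp only [List.map_cons, List.prod_cons,
      ih _ hlt (isReducedWord_cons_iff.mp ht).1 (isReducedWord_cons_iff.mp ht').1
        (mul_left_cancel htt') rfl]
  match l, l', hl, hl', h, hN, hl.length_eq hl' h with
  | [], [], _, _, _, _, _ => rfl
  | a :: s, c :: s', hl, hl', h, hN, hlen =>
    have hs : s.length < N := by simp at hN; omega
    by_cases hac : a = c
    · subst hac
      exact same_head hs hl hl' h
    -- `a` and `c` are both left descents of the product, which therefore has the reduced words
    -- `braidWord a c ++ r` and `braidWord c a ++ r`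
    obtain ⟨r, hr, hrw⟩ := exists_isReducedWord_braidWord_append hac hl.isLeftDescent_head
      (h ▸ hl'.isLeftDescent_head)
    obtain ⟨hr', hrw'⟩ := hr.braidWord_comm_append
    calc ((a :: s).map f).prod = ((braidWord a c ++ r).map f).prod :=
          same_head hs hl hr hrw.symm
      _ = ((braidWord c a ++ r).map f).prod := by
          rw [List.map_append, List.prod_append, hf.prod_map_braidWord_comm,
            ← List.prod_append, ← List.map_append]
      _ = ((c :: s').map f).prod :=
          (same_head (by simp at hlen; omega) hl' hr' (h.symm.trans (hrw' ▸ hrw).symm)).symm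

theorem SatisfiesBraidRelations.prod_map_eq_zero_of_not_isReducedWord [MonoidWithZero M]
    (hf : SatisfiesBraidRelations f) (hsq : ∀ i, f i * f i = 0) {l : List (Fin m)}
    (hl : ¬IsReducedWord l) : (l.map f).prod = 0 := by
  induction l with
  | nil => exact absurd isReducedWord_nil hl
  | cons i t ih =>
    by_cases ht : IsReducedWord t
    · have hdes : IsLeftDescent i (wordProd t) := by
        by_contra hdes
        exact hl (isReducedWord_cons_iff.mpr ⟨ht, hdes⟩)
      obtain ⟨r, hr, hrw⟩ := exists_isReducedWord_cons hdes
      rw [List.map_cons, List.prod_cons, hf.prod_map_eq_of_isReducedWord ht hr hrw.symm,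
        List.map_cons, List.prod_cons, ← mul_assoc, hsq, zero_mul]
    · rw [List.map_cons, List.prod_cons, ih ht, mul_zero]

end Matsumoto

section Staircase

variable {m : ℕ}

def descWord (t : ℕ) (h : t ≤ m) : List (Fin m) := ((List.finRange t).map (Fin.castLE h)).reverse

lemma descWord_succ (t : ℕ) (h : t + 1 ≤ m) :
    descWord (t + 1) h = ⟨t, h⟩ :: descWord t (Nat.le_of_succ_le h) := by
  simp [descWord, List.finRange_succ_last, Function.comp_def, Fin.ext_iff]

def stairWord : (r : ℕ) → r ≤ m → List (Fin m)
  | 0, _ => []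
  | r + 1, h => stairWord r (Nat.le_of_succ_le h) ++ descWord (r + 1) h

lemma two_mul_length_stairWord (r : ℕ) (h : r ≤ m) :
    2 * (stairWord r h).length = r * (r + 1) := by
  induction r with
  | zero => rfl
  | succ r ih =>
    simp only [stairWord, List.length_append, descWord, List.length_reverse, List.length_map,
      List.length_finRange]
    have := ih (Nat.le_of_succ_le h)
    ring_nf at this ⊢
    omega

end Staircase

end Equiv.Perm

namespace MvPolynomial

variable {σ R : Type*}

lemma X_sub_X_ne_zero [CommRing R] [Nontrivial R] {a b : σ} (hab : a ≠ b) :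
    (X a - X b : MvPolynomial σ R) ≠ 0 :=
  sub_ne_zero.mpr ((X_injective (σ := σ) (R := R)).ne hab)

lemma isSymmetric_of_rename_swap_castSucc_succ [CommSemiring R] {m : ℕ}
    {p : MvPolynomial (Fin (m + 1)) R} (h : ∀ i : Fin m, rename (swap i.castSucc i.succ) p = p) :
    p.IsSymmetric := by
  intro w
  have hw : w ∈ Submonoid.closure (Set.range fun i : Fin m => swap i.castSucc i.succ) := by
    rw [Perm.mclosure_swap_castSucc_succ]
    trivial
  induction hw using Submonoid.closure_induction with
  | mem _ hx => obtain ⟨i, rfl⟩ := hx; exact h i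
  | one => exact rename_id_apply p
  | mul x y _ _ hx hy => rw [Perm.coe_mul, ← rename_rename, hy, hx]

variable [CommRing R] [DecidableEq σ]

lemma rename_swap_rename_swap (a b : σ) (f : MvPolynomial σ R) :
    rename (swap a b) (rename (swap a b) f) = f := by
  rw [rename_rename, ← Perm.coe_mul, swap_mul_self, Perm.coe_one, rename_id_apply]

lemma prod_X_pow_eq_mul_X [Fintype σ] {e e' : σ → ℕ} {a : σ} (ha : e a = e' a + 1)
    (h : ∀ j ≠ a, e j = e' j) :
    ∏ j, (X j : MvPolynomial σ R) ^ e j = (∏ j, (X j : MvPolynomial σ R) ^ e' j) * X a := by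
  rw [Fintype.prod_eq_mul_prod_compl a, Fintype.prod_eq_mul_prod_compl a, ha, pow_succ,
    Finset.prod_congr rfl fun j hj => by rw [h j (by simpa using hj)]]
  ring

lemma rename_swap_prod_X_pow [Fintype σ] {e : σ → ℕ} {a b : σ} (hab : e a = e b) :
    rename (swap a b) (∏ j, (X j : MvPolynomial σ R) ^ e j) =
      ∏ j, (X j : MvPolynomial σ R) ^ e j := by
  simp only [map_prod, map_pow, rename_X]
  refine Fintype.prod_equiv (swap a b) _ _ fun j => ?_
  congr 1
  rcases eq_or_ne j a with rfl | hja
  · rw [swap_apply_left, hab]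
  rcases eq_or_ne j b with rfl | hjb
  · rw [swap_apply_right, hab]
  · rw [swap_apply_of_ne_of_ne hja hjb]

def IsDivDiff (a b : σ) (P : Module.End R (MvPolynomial σ R)) : Prop :=
  ∀ f, (X a - X b) * P f = f - rename (swap a b) f

namespace IsDivDiff

variable {a b c d : σ} {P Q : Module.End R (MvPolynomial σ R)}

lemma symm (hP : IsDivDiff a b P) : IsDivDiff b a (-P) := fun f => by
  rw [LinearMap.neg_apply, swap_comm, ← hP f]
  ring

variable [IsDomain R]

lemma rename_swap_apply (hP : IsDivDiff a b P) (hab : a ≠ b) (f : MvPolynomial σ R) :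
    rename (swap a b) (P f) = P f := by
  refine mul_left_cancel₀ (X_sub_X_ne_zero (R := R) hab) ?_
  have h := congrArg (rename (swap a b)) (hP f)
  simp only [map_mul, map_sub, rename_X, swap_apply_left, swap_apply_right,
    rename_swap_rename_swap] at h
  linear_combination -h - hP f

lemma apply_apply (hP : IsDivDiff a b P) (hab : a ≠ b) (f : MvPolynomial σ R) :
    P (P f) = 0 := by
  refine mul_left_cancel₀ (X_sub_X_ne_zero (R := R) hab) ?_
  rw [mul_zero, hP, hP.rename_swap_apply hab, sub_self]

lemma apply_mul_of_rename_swap (hP : IsDivDiff a b P) (hab : a ≠ b) {g : MvPolynomial σ R}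
    (hg : rename (swap a b) g = g) (f : MvPolynomial σ R) : P (g * f) = g * P f := by
  refine mul_left_cancel₀ (X_sub_X_ne_zero (R := R) hab) ?_
  have e : rename (swap a b) (g * f) = g * rename (swap a b) f := by rw [map_mul, hg]
  linear_combination hP (g * f) - g * hP f - e

lemma apply_mul_X (hP : IsDivDiff a b P) (hab : a ≠ b) {g : MvPolynomial σ R}
    (hg : rename (swap a b) g = g) : P (g * X a) = g := by
  have h : P (X a) = 1 := mul_left_cancel₀ (X_sub_X_ne_zero (R := R) hab) <| by
    rw [hP, rename_X, swap_apply_left, mul_one]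
  rw [hP.apply_mul_of_rename_swap hab hg, h, mul_one]

lemma comm (hP : IsDivDiff a b P) (hQ : IsDivDiff c d Q) (hab : a ≠ b) (hcd : c ≠ d)
    (hac : a ≠ c) (had : a ≠ d) (hbc : b ≠ c) (hbd : b ≠ d) : P * Q = Q * P := by
  refine LinearMap.ext fun f => mul_left_cancel₀ (mul_ne_zero (X_sub_X_ne_zero (R := R) hab)
    (X_sub_X_ne_zero (R := R) hcd)) ?_
  have hst : rename (swap a b) (rename (swap c d) f) =
      rename (swap c d) (rename (swap a b) f) := by
    rw [rename_rename, rename_rename, ← Perm.coe_mul, ← Perm.coe_mul,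
      (Perm.disjoint_swap_swap (by simp [*, Ne.symm])).commute.eq]
  have h₁ := congrArg (rename (swap a b)) (hQ f)
  have h₂ := congrArg (rename (swap c d)) (hP f)
  simp only [map_mul, map_sub, rename_X, swap_apply_of_ne_of_ne hac.symm hbc.symm,
    swap_apply_of_ne_of_ne had.symm hbd.symm, swap_apply_of_ne_of_ne hac had,
    swap_apply_of_ne_of_ne hbc hbd] at h₁ h₂
  simp only [Module.End.mul_apply]
  linear_combination (X c - X d) * hP (Q f) + hQ f - h₁ - (X a - X b) * hQ (P f) - hP f + h₂ + hst

/-- The right-hand side is the alternating sum over the permutations of `x_a, x_b, x_c`; it is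
invariant under `(P, a) ↔ (-Q, c)`, which gives the braid relation. -/
lemma vandermonde_mul_apply_apply_apply (hP : IsDivDiff a b P) (hQ : IsDivDiff b c Q)
    (hab : a ≠ b) (hac : a ≠ c) (hbc : b ≠ c) (f : MvPolynomial σ R) :
    (X a - X b) * (X a - X c) * (X b - X c) * P (Q (P f)) =
      f - rename (swap a b) f - rename (swap b c) f
        + rename (swap b c) (rename (swap a b) f) + rename (swap a b) (rename (swap b c) f)
        - rename (swap a b) (rename (swap b c) (rename (swap a b) f)) := by
  have h₁ := congrArg (rename (swap a b)) (hQ (P f))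
  have h₂ := congrArg (rename (swap b c)) (hP f)
  have h₃ := congrArg (rename (swap a b)) h₂
  simp only [map_mul, map_sub, rename_X, swap_apply_left, swap_apply_right,
    swap_apply_of_ne_of_ne hac.symm hbc.symm, swap_apply_of_ne_of_ne hab hac,
    hP.rename_swap_apply hab] at h₁ h₂ h₃
  linear_combination (X a - X c) * (X b - X c) * hP (Q (P f)) + (X a - X c) * hQ (P f)
    - (X b - X c) * h₁ + hP f - h₂ + h₃

lemma braid (hP : IsDivDiff a b P) (hQ : IsDivDiff b c Q) (hab : a ≠ b) (hac : a ≠ c)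
    (hbc : b ≠ c) : P * Q * P = Q * P * Q := by
  refine LinearMap.ext fun f => mul_left_cancel₀ (mul_ne_zero (mul_ne_zero
    (X_sub_X_ne_zero (R := R) hab) (X_sub_X_ne_zero (R := R) hac))
    (X_sub_X_ne_zero (R := R) hbc)) ?_
  have h := hQ.symm.vandermonde_mul_apply_apply_apply hP.symm hbc.symm hac.symm hab.symm f
  have hsts : rename (swap a b) (rename (swap b c) (rename (swap a b) f)) =
      rename (swap b c) (rename (swap a b) (rename (swap b c) f)) := by
    simp only [rename_rename, ← Perm.coe_mul, ← mul_assoc, swap_mul_swap_mul_swap_eq hab hac hbc]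
  simp only [LinearMap.neg_apply, map_neg, neg_neg, swap_comm c b, swap_comm b a] at h
  simp only [Module.End.mul_apply]
  linear_combination hP.vandermonde_mul_apply_apply_apply hQ hab hac hbc f - h - hsts

end IsDivDiff

end MvPolynomial

namespace Module.End

variable {k A : Type*} [CommRing k] [CommRing A] [Algebra k A]

def cornerMap (B : Subalgebra k A) (e : Module.End k A) : B →ₗ[k] Module.End k A :=
  LinearMap.mulRight k e ∘ₗ (Algebra.lmul k A).toLinearMap ∘ₗ B.val.toLinearMap

variable {B : Subalgebra k A} {H : Subalgebra k (Module.End k A)} {e : Module.End k A}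

lemma cornerMap_apply (p : B) : cornerMap B e p = Algebra.lmul k A p * e := rfl

lemma cornerMap_one : cornerMap B e 1 = e := by
  rw [cornerMap_apply, OneMemClass.coe_one, map_one, one_mul]

lemma cornerMap_injective (he₁ : e 1 = 1) : Function.Injective (cornerMap B e) :=
  fun p q h => by simpa [cornerMap_apply, he₁] using LinearMap.congr_fun h 1

variable (hH : ∀ S ∈ H, ∀ b ∈ B, Commute S (Algebra.lmul k A b)) (he : e ∈ H)
  (he₁ : e 1 = 1) (heB : ∀ f, e f ∈ B)
include hH he he₁ heB

lemma isIdempotentElem_of_commute : IsIdempotentElem e :=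
  LinearMap.ext fun f => by simpa [he₁] using LinearMap.congr_fun (hH e he _ (heB f)) 1

lemma cornerMap_mul (p q : B) :
    cornerMap B e (p * q) = cornerMap B e p * cornerMap B e q := by
  simp only [cornerMap_apply, Subalgebra.coe_mul, map_mul]
  rw [mul_assoc _ e, ← mul_assoc e, (hH e he q q.2).eq, mul_assoc _ e e,
    (isIdempotentElem_of_commute hH he he₁ heB).eq, ← mul_assoc]

lemma range_cornerMap (hB : ∀ b ∈ B, Algebra.lmul k A b ∈ H) :
    Set.range (cornerMap B e) = {T | ∃ S ∈ H, T = e * S * e} := by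
  have hcomm (S : Module.End k A) (hS : S ∈ H) (b : A) (hb : b ∈ B) (f : A) :
      S (b * f) = b * S f :=
    LinearMap.congr_fun (hH S hS b hb) f
  ext T
  constructor
  · rintro ⟨p, rfl⟩
    refine ⟨_, hB p p.2, ?_⟩
    rw [cornerMap_apply, (hH e he p p.2).eq, mul_assoc,
      (isIdempotentElem_of_commute hH he he₁ heB).eq]
  · rintro ⟨S, hS, rfl⟩
    refine ⟨⟨e (S 1), heB _⟩, LinearMap.ext fun g => ?_⟩
    calc e (S 1) * e g = e (e g * S 1) := by rw [hcomm e he _ (heB g), mul_comm]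
      _ = e (S (e g)) := by rw [← hcomm S hS _ (heB g), mul_one]

end Module.End

open Perm Module.End

namespace IsDividedDifferenceFamily

variable {k : Type} [Field k] {m : ℕ} {D : Fin m → Module.End k (MvPolynomial (Fin (m + 1)) k)}
  (hD : IsDividedDifferenceFamily k m D)

include hD

lemma isDivDiff (i : Fin m) : IsDivDiff i.castSucc i.succ (D i) := hD i

lemma satisfiesBraidRelations : SatisfiesBraidRelations D := by
  refine ⟨fun i j hij => ?_, fun i j hij => ?_⟩
  · have hq : j.castSucc = i.succ := Fin.ext (by simp [hij])
    have hj := hD.isDivDiff j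
    rw [hq] at hj
    exact (hD.isDivDiff i).braid hj Fin.castSucc_lt_succ.ne (by simp [Fin.ext_iff]; omega)
      (by simp [Fin.ext_iff]; omega)
  · exact (hD.isDivDiff i).comm (hD.isDivDiff j) Fin.castSucc_lt_succ.ne
      Fin.castSucc_lt_succ.ne (by simp [Fin.ext_iff]; omega) (by simp [Fin.ext_iff]; omega)
      (by simp [Fin.ext_iff]; omega) (by simp [Fin.ext_iff]; omega)

lemma mul_self (i : Fin m) : D i * D i = 0 :=
  LinearMap.ext ((hD.isDivDiff i).apply_apply Fin.castSucc_lt_succ.ne)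

lemma prod_descWord_apply {r : ℕ} (hr : r ≤ m) (t : ℕ) (ht : t ≤ r) :
    ((descWord t (ht.trans hr)).map D).prod
        (∏ j : Fin (m + 1), (X j : MvPolynomial (Fin (m + 1)) k) ^ (r - j)) =
      ∏ j : Fin (m + 1), (X j : MvPolynomial (Fin (m + 1)) k) ^
        (if (j : ℕ) < t then r - 1 - j else r - j) := by
  induction t with
  | zero => simp [descWord]
  | succ t ih =>
    have htm : t < m := by omega
    rw [descWord_succ t (ht.trans hr), List.map_cons, List.prod_cons, Module.End.mul_apply,
      ih (by omega), prod_X_pow_eq_mul_X (a := (⟨t, htm⟩ : Fin m).castSucc)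
        (e' := fun j : Fin (m + 1) => if (j : ℕ) < t + 1 then r - 1 - j else r - j)
        (by simp; omega) (fun j hj => by simp [Fin.ext_iff] at hj; split_ifs <;> omega)]
    exact (hD.isDivDiff _).apply_mul_X Fin.castSucc_lt_succ.ne
      (rename_swap_prod_X_pow (by simp; omega))

lemma prod_stairWord_apply (r : ℕ) (h : r ≤ m) :
    ((stairWord r h).map D).prod
      (∏ j : Fin (m + 1), (X j : MvPolynomial (Fin (m + 1)) k) ^ (r - j)) = 1 := by
  induction r with
  | zero => simp [stairWord]
  | succ r ih =>
    rw [stairWord, List.map_append, List.prod_append, Module.End.mul_apply,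
      hD.prod_descWord_apply h _ le_rfl]
    convert ih (Nat.le_of_succ_le h) using 4 with j
    split_ifs <;> omega

lemma prod_apply_staircase {l : List (Fin m)} (hl : IsReducedWord l)
    (hw : wordProd l = Fin.revPerm) :
    (l.map D).prod (∏ j : Fin (m + 1), (X j : MvPolynomial (Fin (m + 1)) k) ^ (m - j)) = 1 := by
  have h₀ := hD.prod_stairWord_apply m le_rfl
  have hred₀ : IsReducedWord (stairWord m le_rfl) := by
    by_contra hnot
    rw [hD.satisfiesBraidRelations.prod_map_eq_zero_of_not_isReducedWord hD.mul_self hnot] at h₀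
    exact zero_ne_one h₀
  have hw₀ : wordProd (stairWord m le_rfl) = Fin.revPerm := by
    apply eq_revPerm_of_numInversions_eq
    rw [hred₀, Nat.add_sub_cancel, mul_comm, ← two_mul_length_stairWord m le_rfl,
      Nat.mul_div_cancel_left _ two_pos]
  rwa [hD.satisfiesBraidRelations.prod_map_eq_of_isReducedWord hl hred₀ (hw.trans hw₀.symm)]

lemma mul_prod_eq_zero {l : List (Fin m)} (hlen : l.length = (m + 1) * m / 2) (i : Fin m) :
    D i * (l.map D).prod = 0 := by
  have hl : ¬IsReducedWord (i :: l) := fun h => by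
    have := numInversions_le (wordProd (i :: l))
    rw [h, List.length_cons, hlen, Nat.add_sub_cancel] at this
    omega
  simpa using hD.satisfiesBraidRelations.prod_map_eq_zero_of_not_isReducedWord hD.mul_self hl

lemma isSymmetric_prod_apply {l : List (Fin m)} (hlen : l.length = (m + 1) * m / 2)
    (g : MvPolynomial (Fin (m + 1)) k) : ((l.map D).prod g).IsSymmetric := by
  refine isSymmetric_of_rename_swap_castSucc_succ fun i => ?_
  have h := hD i ((l.map D).prod g)
  rw [← Module.End.mul_apply, hD.mul_prod_eq_zero hlen i, LinearMap.zero_apply, mul_zero] at h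
  exact (sub_eq_zero.mp h.symm).symm

lemma commute_lmul_of_mem_nilHecke {S : Module.End k (MvPolynomial (Fin (m + 1)) k)}
    (hS : S ∈ nilHecke k m D) {h : MvPolynomial (Fin (m + 1)) k} (hh : h.IsSymmetric) :
    Commute S (Algebra.lmul k _ h) := by
  induction hS using Algebra.adjoin_induction with
  | mem T hT =>
    rcases hT with ⟨j, rfl⟩ | ⟨i, rfl⟩
    · exact (Commute.all (X j) h).map (Algebra.lmul k _)
    · exact LinearMap.ext
        ((hD.isDivDiff i).apply_mul_of_rename_swap Fin.castSucc_lt_succ.ne (hh _))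
  | algebraMap r => exact Algebra.commute_algebraMap_left r _
  | add S T _ _ hS hT => exact hS.add_left hT
  | mul S T _ _ hS hT => exact hS.mul_left hT

end IsDividedDifferenceFamily

lemma lmul_mem_nilHecke {k : Type} [Field k] {m : ℕ}
    (D : Fin m → Module.End k (MvPolynomial (Fin (m + 1)) k))
    (p : MvPolynomial (Fin (m + 1)) k) : Algebra.lmul k _ p ∈ nilHecke k m D := by
  have h : (nilHecke k m D).comap (Algebra.lmul k _) = ⊤ := by
    rw [eq_top_iff, ← adjoin_range_X, Algebra.adjoin_le_iff]
    rintro _ ⟨j, rfl⟩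
    exact Algebra.subset_adjoin (Or.inl ⟨j, rfl⟩)
  rw [← Subalgebra.mem_comap, h]
  trivial

theorem stmt14 (k : Type) [Field k] (m : ℕ)
    (D : Fin m → Module.End k (MvPolynomial (Fin (m + 1)) k))
    (hD : IsDividedDifferenceFamily k m D)
    (l : List (Fin m))
    (hlen : l.length = (m + 1) * m / 2)
    (hprod : (l.map fun i : Fin m => Equiv.swap i.castSucc i.succ).prod =
      (Fin.revPerm : Equiv.Perm (Fin (m + 1)))) :
    let e := (l.map D).prod * mulOp k m (∏ j : Fin (m + 1), X j ^ (m - (j : ℕ)))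
    ∃ φ : ↥(MvPolynomial.symmetricSubalgebra (Fin (m + 1)) k) →ₗ[k]
        Module.End k (MvPolynomial (Fin (m + 1)) k),
      Function.Injective φ ∧
      (∀ p q, φ (p * q) = φ p * φ q) ∧
      φ 1 = e ∧
      Set.range φ = {T | ∃ S ∈ nilHecke k m D, T = e * S * e} := by
  intro e
  have hred : IsReducedWord l := by
    rw [IsReducedWord, show wordProd l = Fin.revPerm from hprod, numInversions_revPerm, hlen,
      Nat.add_sub_cancel]
  have hH : ∀ S ∈ nilHecke k m D, ∀ b ∈ symmetricSubalgebra (Fin (m + 1)) k,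
      Commute S (Algebra.lmul k _ b) := fun S hS b hb =>
    hD.commute_lmul_of_mem_nilHecke hS ((mem_symmetricSubalgebra b).mp hb)
  have he : e ∈ nilHecke k m D := by
    refine Subalgebra.mul_mem _ ((nilHecke k m D).list_prod_mem fun T hT => ?_)
      (lmul_mem_nilHecke D _)
    obtain ⟨i, -, rfl⟩ := List.mem_map.mp hT
    exact Algebra.subset_adjoin (Or.inr ⟨i, rfl⟩)
  have he₁ : e 1 = 1 := by
    simpa [e, mulOp] using hD.prod_apply_staircase hred hprod
  have heB (f) : e f ∈ symmetricSubalgebra (Fin (m + 1)) k :=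
    (mem_symmetricSubalgebra _).mpr (hD.isSymmetric_prod_apply hlen _)
  exact ⟨cornerMap _ e, cornerMap_injective he₁, cornerMap_mul hH he he₁ heB, cornerMap_one,
    range_cornerMap hH he he₁ heB fun b _ => lmul_mem_nilHecke D b⟩
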